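/- The horizon Killing vector fields of Kerr–de Sitter are lightlike and orthogonal to the horizons, with non-degenerate transversal derivative: for h ∈ {e, c} let W_h := (1, 0, a/(r_h² + a²), 0) ∈ ℝ⁴ (components with respect to the coordinates (t*, r, φ*, θ)). Then for every θ ∈ ℝ: (i) W_hᵀ · g*(r_h, θ) · W_h = 0; (ii) the t*-, φ*- and θ-components of the vector g*(r_h, θ)·W_h vanish, while its r-component equals ε_h · ρ²(r_h,θ)/(b(r_h² + a²)) with ε_e = −1 and ε_c = +1, which is nonzero; (iii) (d/dr)[W_hᵀ · g*(r, θ) · W_h] evaluated at r = r_h equals −μ'(r_h)·ρ²(r_h,θ)/(b²(r_h² + a²)²), which is nonzero since μ'(r_h) ≠ 0. -/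

import Mathlib

open Set Matrix

noncomputable section

namespace KdSHorizonKVF

/-- The horizon quartic `μ(r) = (r² + a²)(1 − Λr²/3) − 2mr`. -/
def mu (a m Λ r : ℝ) : ℝ := (r ^ 2 + a ^ 2) * (1 - Λ * r ^ 2 / 3) - 2 * m * r

/-- `b = 1 + Λa²/3`. -/
def bc (a Λ : ℝ) : ℝ := 1 + Λ * a ^ 2 / 3

/-- `c(θ) = 1 + (Λa²/3)cos²θ`. -/
def cth (a Λ θ : ℝ) : ℝ := 1 + Λ * a ^ 2 / 3 * Real.cos θ ^ 2

/-- `ρ²(r,θ) = r² + a²cos²θ`. -/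
def rhosq (a r θ : ℝ) : ℝ := r ^ 2 + a ^ 2 * Real.cos θ ^ 2

/-- `S(r) = 2(r − r_e)/(r_c − r_e) − 1`. -/
def Sf (re rc r : ℝ) : ℝ := 2 * (r - re) / (rc - re) - 1

/-- The extended Kerr–de Sitter metric in the coordinates `(t*, r, φ*, θ)`. -/
def gstar (a m Λ r0 rC re rc r θ : ℝ) : Matrix (Fin 4) (Fin 4) ℝ :=
  !![(a ^ 2 * cth a Λ θ * Real.sin θ ^ 2 - mu a m Λ r) / (bc a Λ ^ 2 * rhosq a r θ),
       Sf re rc r / bc a Λ,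
       a * Real.sin θ ^ 2 * (mu a m Λ r - cth a Λ θ * (r ^ 2 + a ^ 2)) /
         (bc a Λ ^ 2 * rhosq a r θ), 0;
     Sf re rc r / bc a Λ, -4 * rhosq a r θ / ((r - r0) * (r - rC) * (rc - re) ^ 2),
       -(a * Real.sin θ ^ 2 * Sf re rc r / bc a Λ), 0;
     a * Real.sin θ ^ 2 * (mu a m Λ r - cth a Λ θ * (r ^ 2 + a ^ 2)) /
       (bc a Λ ^ 2 * rhosq a r θ), -(a * Real.sin θ ^ 2 * Sf re rc r / bc a Λ),
       Real.sin θ ^ 2 * (cth a Λ θ * (r ^ 2 + a ^ 2) ^ 2 -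
         mu a m Λ r * a ^ 2 * Real.sin θ ^ 2) / (bc a Λ ^ 2 * rhosq a r θ), 0;
     0, 0, 0, rhosq a r θ / cth a Λ θ]

/-- The coordinate expression `W_h = ∂_{t*} + (a/(r_h²+a²))∂_{φ*}` of the horizon
Killing vector field, with respect to the coordinates `(t*, r, φ*, θ)`. -/
def W (a rh : ℝ) : Fin 4 → ℝ := ![1, 0, a / (rh ^ 2 + a ^ 2), 0]

end KdSHorizonKVF

open KdSHorizonKVF

/-!
At a horizon `μ(r_h) = 0`. Writing `Q = r_h² + a²` and using `Q - a² sin²θ = ρ²(r_h, θ)`,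
the quadratic form of `W_h` along `r` is
`(c a² sin²θ (r² - r_h²)² - ρ²(r_h, θ)² μ(r)) / (b² Q² ρ²(r, θ))`,
so it vanishes at `r_h` and its derivative there comes from `μ'(r_h)` alone; the `r`-component
of `g* W_h` is `S(r) ρ²(r_h, θ) / (b Q)`, with `S(r_e) = -1` and `S(r_c) = 1`.
Comparing coefficients of the quartic `μ` gives `μ(r) = -(Λ/3)(r - r0)(r - rC)(r - re)(r - rc)`,
so the horizons are simple roots, and the Vieta relations `r0 + rC + re + rc = 0` and
`Λ e₃(r0, rC, re, rc) = -6m < 0` rule out `r_h = 0`, which keeps `Q` and `ρ²(r_h, θ)`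
positive.
-/

open Polynomial in
theorem cubic_coeffs_eq_zero_of_card_lt {R : Type*} [CommRing R] [IsDomain R]
    {c₀ c₁ c₂ c₃ : R} (s : Finset R) (hs : 3 < s.card)
    (h : ∀ x ∈ s, c₃ * x ^ 3 + c₂ * x ^ 2 + c₁ * x + c₀ = 0) :
    c₀ = 0 ∧ c₁ = 0 ∧ c₂ = 0 ∧ c₃ = 0 := by
  set P : R[X] := C c₃ * X ^ 3 + C c₂ * X ^ 2 + C c₁ * X + C c₀
  have hP : P = 0 := P.eq_zero_of_natDegree_lt_card_of_eval_eq_zero' s (by simpa [P] using h)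
    (lt_of_le_of_lt (by unfold P; compute_degree) hs)
  refine ⟨?_, ?_, ?_, ?_⟩
  · simpa [P] using congrArg (coeff · 0) hP
  · simpa [P] using congrArg (coeff · 1) hP
  · simpa [P] using congrArg (coeff · 2) hP
  · simpa [P] using congrArg (coeff · 3) hP

section Deriv

variable {𝕜 : Type*} [NontriviallyNormedField 𝕜]

theorem HasDerivAt.div_of_apply_eq_zero {f g : 𝕜 → 𝕜} {f' g' x : 𝕜}
    (hf : HasDerivAt f f' x) (hg : HasDerivAt g g' x) (hgx : g x ≠ 0) (hfx : f x = 0) :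
    HasDerivAt (fun y => f y / g y) (f' / g x) x := by
  simpa [hfx, sq, mul_div_mul_right _ _ hgx] using hf.fun_div hg hgx

theorem deriv_ne_zero_of_eq_mul_sub {f g : 𝕜 → 𝕜} {w : 𝕜}
    (hfg : ∀ x, f x = g x * (x - w)) (hg : DifferentiableAt 𝕜 g w) (hgw : g w ≠ 0) :
    deriv f w ≠ 0 := by
  have hf : HasDerivAt f (g w) w := by
    rw [funext hfg]
    simpa using hg.hasDerivAt.fun_mul ((hasDerivAt_id w).sub_const w)
  rwa [hf.deriv]

end Deriv

namespace KdSHorizonKVF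

structure Subextremal (a m Λ r0 rC re rc : ℝ) : Prop where
  r0_lt_rC : r0 < rC
  rC_lt_re : rC < re
  re_lt_rc : re < rc
  mu_r0 : mu a m Λ r0 = 0
  mu_rC : mu a m Λ rC = 0
  mu_re : mu a m Λ re = 0
  mu_rc : mu a m Λ rc = 0

namespace Subextremal

variable {a m Λ r0 rC re rc : ℝ}

theorem vieta (h : Subextremal a m Λ r0 rC re rc) (hΛ : Λ ≠ 0) :
    r0 + rC + re + rc = 0 ∧
    Λ * (r0 * rC + r0 * re + r0 * rc + rC * re + rC * rc + re * rc) = Λ * a ^ 2 - 3 ∧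
    Λ * (r0 * rC * re + r0 * rC * rc + r0 * re * rc + rC * re * rc) = -6 * m ∧
    Λ * (r0 * rC * re * rc) = -3 * a ^ 2 := by
  have hcard : 3 < ({r0, rC, re, rc} : Finset ℝ).card := by
    rw [Finset.card_eq_four.mpr
      ⟨r0, rC, re, rc, by grind [h.r0_lt_rC, h.rC_lt_re, h.re_lt_rc]⟩]
    norm_num
  -- the coefficients of the cubic `μ(x) + (Λ/3)(x - r0)(x - rC)(x - re)(x - rc)`
  obtain ⟨h₀, h₁, h₂, h₃⟩ := cubic_coeffs_eq_zero_of_card_lt _ hcard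
    (c₃ := -(Λ / 3) * (r0 + rC + re + rc))
    (c₂ := 1 - Λ * a ^ 2 / 3 +
      Λ / 3 * (r0 * rC + r0 * re + r0 * rc + rC * re + rC * rc + re * rc))
    (c₁ := -2 * m - Λ / 3 * (r0 * rC * re + r0 * rC * rc + r0 * re * rc + rC * re * rc))
    (c₀ := a ^ 2 + Λ / 3 * (r0 * rC * re * rc)) (by
      intro x hx
      simp only [Finset.mem_insert, Finset.mem_singleton] at hx
      obtain ⟨-, -, -, h0, hC, he, hc⟩ := h
      unfold mu at h0 hC he hc
      rcases hx with rfl | rfl | rfl | rfl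
      · linear_combination h0
      · linear_combination hC
      · linear_combination he
      · linear_combination hc)
  refine ⟨?_, ?_, ?_, ?_⟩
  · simpa [hΛ] using h₃
  · linear_combination 3 * h₂
  · linear_combination -3 * h₁
  · linear_combination 3 * h₀

theorem mu_eq_neg_mul_prod (h : Subextremal a m Λ r0 rC re rc) (hΛ : Λ ≠ 0) (r : ℝ) :
    mu a m Λ r = -(Λ / 3) * ((r - r0) * (r - rC) * (r - re) * (r - rc)) := by
  obtain ⟨h₁, h₂, h₃, h₄⟩ := h.vieta hΛ
  unfold mu
  linear_combination
    (-(Λ / 3) * r ^ 3) * h₁ + (r ^ 2 / 3) * h₂ - (r / 3) * h₃ + (1 / 3) * h₄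

theorem re_ne_zero (h : Subextremal a m Λ r0 rC re rc) (hm : 0 < m) (hΛ : 0 < Λ) : re ≠ 0 := by
  rintro rfl
  obtain ⟨-, -, h₃, -⟩ := h.vieta hΛ.ne'
  have hr0rC : 0 < r0 * rC := mul_pos_of_neg_of_neg (h.r0_lt_rC.trans h.rC_lt_re) h.rC_lt_re
  nlinarith [mul_pos (mul_pos hr0rC h.re_lt_rc) hΛ]

theorem rc_ne_zero (h : Subextremal a m Λ r0 rC re rc) (hΛ : Λ ≠ 0) : rc ≠ 0 := by
  rintro rfl
  obtain ⟨h₁, -⟩ := h.vieta hΛ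
  linarith [h.r0_lt_rC, h.rC_lt_re, h.re_lt_rc]

theorem deriv_mu_re_ne_zero (h : Subextremal a m Λ r0 rC re rc) (hΛ : Λ ≠ 0) :
    deriv (mu a m Λ) re ≠ 0 := by
  exact deriv_ne_zero_of_eq_mul_sub (g := fun r => -(Λ / 3) * ((r - r0) * (r - rC) * (r - rc)))
    (fun r => by rw [h.mu_eq_neg_mul_prod hΛ]; ring) (by fun_prop)
    (by
      simp only [ne_eq, mul_eq_zero, neg_eq_zero, div_eq_zero_iff, sub_eq_zero, not_or]
      grind [h.r0_lt_rC, h.rC_lt_re, h.re_lt_rc])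

theorem deriv_mu_rc_ne_zero (h : Subextremal a m Λ r0 rC re rc) (hΛ : Λ ≠ 0) :
    deriv (mu a m Λ) rc ≠ 0 := by
  exact deriv_ne_zero_of_eq_mul_sub (g := fun r => -(Λ / 3) * ((r - r0) * (r - rC) * (r - re)))
    (fun r => by rw [h.mu_eq_neg_mul_prod hΛ]; ring) (by fun_prop)
    (by
      simp only [ne_eq, mul_eq_zero, neg_eq_zero, div_eq_zero_iff, sub_eq_zero, not_or]
      grind [h.r0_lt_rC, h.rC_lt_re, h.re_lt_rc])

end Subextremal

section Metric

variable {a m Λ r0 rC re rc rh θ : ℝ}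

theorem differentiable_mu (a m Λ : ℝ) : Differentiable ℝ (mu a m Λ) := by
  unfold mu; fun_prop

theorem rhosq_pos (a θ : ℝ) {r : ℝ} (hr : r ≠ 0) : 0 < rhosq a r θ := by
  unfold rhosq; positivity

theorem mulVec_W_apply (M : Matrix (Fin 4) (Fin 4) ℝ) (i : Fin 4) :
    M.mulVec (W a rh) i = M i 0 + M i 2 * (a / (rh ^ 2 + a ^ 2)) := by
  simp [W, mulVec, dotProduct, Fin.sum_univ_four]

theorem W_dotProduct (v : Fin 4 → ℝ) : W a rh ⬝ᵥ v = v 0 + v 2 * (a / (rh ^ 2 + a ^ 2)) := by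
  simp [W, dotProduct, Fin.sum_univ_four, mul_comm]

theorem gstar_mulVec_W_zero (hμ : mu a m Λ rh = 0) (hQ : rh ^ 2 + a ^ 2 ≠ 0) :
    (gstar a m Λ r0 rC re rc rh θ).mulVec (W a rh) 0 = 0 := by
  rw [mulVec_W_apply]
  simp only [gstar, of_apply, cons_val', cons_val_zero, cons_val_two, head_cons, tail_cons,
    cons_val_fin_one, hμ]
  field_simp
  ring

theorem gstar_mulVec_W_two (hμ : mu a m Λ rh = 0) (hQ : rh ^ 2 + a ^ 2 ≠ 0) :
    (gstar a m Λ r0 rC re rc rh θ).mulVec (W a rh) 2 = 0 := by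
  rw [mulVec_W_apply]
  simp only [gstar, of_apply, cons_val', cons_val_zero, cons_val_two, head_cons, tail_cons,
    cons_val_fin_one, hμ]
  field_simp
  ring

theorem gstar_mulVec_W_three (r : ℝ) :
    (gstar a m Λ r0 rC re rc r θ).mulVec (W a rh) 3 = 0 := by
  simp [mulVec_W_apply, gstar]

theorem gstar_mulVec_W_one (r : ℝ) (hQ : rh ^ 2 + a ^ 2 ≠ 0) :
    (gstar a m Λ r0 rC re rc r θ).mulVec (W a rh) 1 =
      Sf re rc r * rhosq a rh θ / (bc a Λ * (rh ^ 2 + a ^ 2)) := by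
  rw [mulVec_W_apply]
  simp only [gstar, of_apply, cons_val', cons_val_zero, cons_val_one, cons_val_two, head_cons,
    tail_cons, cons_val_fin_one, rhosq, Real.sin_sq]
  field_simp
  ring

-- Where `ρ²(r, θ) = 0` both sides are `0`, by `x / 0 = 0`.
theorem W_dotProduct_gstar_mulVec_W (r : ℝ) (hQ : rh ^ 2 + a ^ 2 ≠ 0) :
    W a rh ⬝ᵥ (gstar a m Λ r0 rC re rc r θ).mulVec (W a rh) =
      (cth a Λ θ * a ^ 2 * Real.sin θ ^ 2 * (r ^ 2 - rh ^ 2) ^ 2 -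
          rhosq a rh θ ^ 2 * mu a m Λ r) /
        (bc a Λ ^ 2 * (rh ^ 2 + a ^ 2) ^ 2 * rhosq a r θ) := by
  rw [W_dotProduct, mulVec_W_apply, mulVec_W_apply]
  simp only [gstar, of_apply, cons_val', cons_val_zero, cons_val_two, head_cons, tail_cons,
    cons_val_fin_one, rhosq, Real.sin_sq]
  field_simp
  ring

theorem hasDerivAt_W_dotProduct_gstar_mulVec_W (hμ : mu a m Λ rh = 0) (hb : bc a Λ ≠ 0)
    (hQ : rh ^ 2 + a ^ 2 ≠ 0) (hρ : rhosq a rh θ ≠ 0) :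
    HasDerivAt (fun r => W a rh ⬝ᵥ (gstar a m Λ r0 rC re rc r θ).mulVec (W a rh))
      (-(deriv (mu a m Λ) rh * rhosq a rh θ / (bc a Λ ^ 2 * (rh ^ 2 + a ^ 2) ^ 2))) rh := by
  have hsq : HasDerivAt (fun r => (r ^ 2 - rh ^ 2) ^ 2) 0 rh :=
    ((((hasDerivAt_id rh).fun_pow 2).sub_const (rh ^ 2)).fun_pow 2).congr_deriv (by simp)
  have hnum := (hsq.const_mul (cth a Λ θ * a ^ 2 * Real.sin θ ^ 2)).fun_sub
    ((differentiable_mu a m Λ rh).hasDerivAt.const_mul (rhosq a rh θ ^ 2))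
  have hden : DifferentiableAt ℝ
      (fun r => bc a Λ ^ 2 * (rh ^ 2 + a ^ 2) ^ 2 * rhosq a r θ) rh := by
    unfold rhosq; fun_prop
  rw [funext (W_dotProduct_gstar_mulVec_W · hQ)]
  refine (hnum.div_of_apply_eq_zero hden.hasDerivAt (by simp [hb, hQ, hρ])
    (by simp [hμ])).congr_deriv ?_
  field_simp
  ring

end Metric

end KdSHorizonKVF

/-- **The horizon Killing vector fields of Kerr–de Sitter are lightlike and orthogonal to
the horizons, with non-degenerate transversal derivative**: for `h ∈ {e, c}`,
(i) `W_hᵀ g*(r_h,θ) W_h = 0`; (ii) the `t*`-, `φ*`- and `θ`-components of `g*(r_h,θ)·W_h`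
vanish while the `r`-component equals `ε_h ρ²(r_h,θ)/(b(r_h²+a²)) ≠ 0` (`ε_e = −1`,
`ε_c = +1`); (iii) `d/dr[W_hᵀ g*(r,θ) W_h]|_{r=r_h} = −μ'(r_h)ρ²(r_h,θ)/(b²(r_h²+a²)²) ≠ 0`. -/
theorem kds_horizon_killing_fields (a m Λ r0 rC re rc : ℝ) (hm : 0 < m) (hΛ : 0 < Λ)
    (h01 : r0 < rC) (h12 : rC < re) (h23 : re < rc)
    (hroot0 : mu a m Λ r0 = 0) (hrootC : mu a m Λ rC = 0)
    (hroote : mu a m Λ re = 0) (hrootc : mu a m Λ rc = 0) :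
    ∀ θ rh εh : ℝ, ((rh = re ∧ εh = -1) ∨ (rh = rc ∧ εh = 1)) →
      (W a rh ⬝ᵥ (gstar a m Λ r0 rC re rc rh θ).mulVec (W a rh) = 0) ∧
      ((gstar a m Λ r0 rC re rc rh θ).mulVec (W a rh) 0 = 0 ∧
       (gstar a m Λ r0 rC re rc rh θ).mulVec (W a rh) 2 = 0 ∧
       (gstar a m Λ r0 rC re rc rh θ).mulVec (W a rh) 3 = 0 ∧
       (gstar a m Λ r0 rC re rc rh θ).mulVec (W a rh) 1
         = εh * rhosq a rh θ / (bc a Λ * (rh ^ 2 + a ^ 2)) ∧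
       εh * rhosq a rh θ / (bc a Λ * (rh ^ 2 + a ^ 2)) ≠ 0) ∧
      (deriv (fun r => W a rh ⬝ᵥ (gstar a m Λ r0 rC re rc r θ).mulVec (W a rh)) rh
         = -(deriv (fun r => mu a m Λ r) rh * rhosq a rh θ /
             (bc a Λ ^ 2 * (rh ^ 2 + a ^ 2) ^ 2)) ∧
       -(deriv (fun r => mu a m Λ r) rh * rhosq a rh θ /
           (bc a Λ ^ 2 * (rh ^ 2 + a ^ 2) ^ 2)) ≠ 0) := by
  intro θ rh εh hrh
  have hsub : Subextremal a m Λ r0 rC re rc := ⟨h01, h12, h23, hroot0, hrootC, hroote, hrootc⟩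
  obtain ⟨hμ, hμ', hrh0, hS, hε⟩ : mu a m Λ rh = 0 ∧ deriv (mu a m Λ) rh ≠ 0 ∧
      rh ≠ 0 ∧ Sf re rc rh = εh ∧ εh ≠ 0 := by
    rcases hrh with ⟨rfl, rfl⟩ | ⟨rfl, rfl⟩
    · exact ⟨hroote, hsub.deriv_mu_re_ne_zero hΛ.ne', hsub.re_ne_zero hm hΛ, by simp [Sf],
        by norm_num⟩
    · refine ⟨hrootc, hsub.deriv_mu_rc_ne_zero hΛ.ne', hsub.rc_ne_zero hΛ.ne', ?_,
        by norm_num⟩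
      rw [Sf, mul_div_assoc, div_self (sub_ne_zero.mpr h23.ne')]
      norm_num
  have hb : bc a Λ ≠ 0 := by unfold bc; positivity
  have hQ : rh ^ 2 + a ^ 2 ≠ 0 := by positivity
  have hρ : rhosq a rh θ ≠ 0 := (rhosq_pos a θ hrh0).ne'
  refine ⟨?_, ⟨gstar_mulVec_W_zero hμ hQ, gstar_mulVec_W_two hμ hQ, gstar_mulVec_W_three rh,
    ?_, by positivity⟩, (hasDerivAt_W_dotProduct_gstar_mulVec_W hμ hb hQ hρ).deriv,
    neg_ne_zero.mpr (by positivity)⟩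
  · simp [W_dotProduct_gstar_mulVec_W rh hQ, hμ]
  · rw [gstar_mulVec_W_one rh hQ, hS]
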